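/- arXiv:2103.10235 — 2 statements merged into one kernel-verified Lean document; each statement's English description precedes it below -/
import Mathlib

section
/- With the setup of affine similarities (T_i)_{i∈I} with pairwise disjoint images T_i[0,1) covering [0,1] up to measure zero: if words w, v ∈ W(I) satisfy T_w(0) = T_v(0), then one of w, v is obtained from the other by concatenating a word j with T_j(0) = 0; i.e. w = v * j or v = w * j for some j ∈ W(I) with T_j(0) = 0. -/
/-- The composition `T_v = T_{i₁} ∘ ⋯ ∘ T_{i_k}` of the affine similarities
`T_i(x) = α_i x + c_i` along the word `v`, applied to `x`. -/
noncomputable def wordMap {I : Type*} (α c : I → ℝ) (v : List I) (x : ℝ) : ℝ :=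
  v.foldr (fun i y => α i * y + c i) x

lemma wordMap_nil {I : Type*} (α c : I → ℝ) (x : ℝ) : wordMap α c [] x = x := rfl

lemma wordMap_cons {I : Type*} (α c : I → ℝ) (i : I) (u : List I) (x : ℝ) :
    wordMap α c (i :: u) x = α i * wordMap α c u x + c i := rfl

lemma wordMap_mem_Ico {I : Type*} (α c : I → ℝ) (hpos : ∀ i, 0 < α i)
    (hc0 : ∀ i, 0 ≤ c i) (hc1 : ∀ i, α i + c i ≤ 1) (u : List I) :
    0 ≤ wordMap α c u 0 ∧ wordMap α c u 0 < 1 := by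
  induction u with
  | nil => simp [wordMap_nil]
  | cons i u ih =>
    rw [wordMap_cons]
    constructor
    · have := (hpos i).le
      nlinarith [ih.1, hc0 i]
    · nlinarith [ih.2, hpos i, hc1 i]

/-- If two words `w, v` have the same left endpoint `T_w(0) = T_v(0)`, then one
is obtained from the other by concatenating a word `j` with `T_j(0) = 0`. -/
theorem eq_endpoint_iff_concat_fixing_word {I : Type*} [Countable I] (α c : I → ℝ)
    (hpos : ∀ i, 0 < α i) (hsum : HasSum α 1)
    (hc0 : ∀ i, 0 ≤ c i) (hc1 : ∀ i, α i + c i ≤ 1)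
    (hdisj : Pairwise fun i j =>
      Disjoint (Set.Ico (c i) (c i + α i)) (Set.Ico (c j) (c j + α j)))
    (w v : List I) (h : wordMap α c w 0 = wordMap α c v 0) :
    ∃ j : List I, (w = v ++ j ∨ v = w ++ j) ∧ wordMap α c j 0 = 0 := by
  induction w generalizing v with
  | nil =>
    exact ⟨v, Or.inr rfl, h.symm⟩
  | cons i w ihw =>
    cases v with
    | nil => exact ⟨i :: w, Or.inl rfl, h⟩
    | cons k v =>
      have memw : wordMap α c (i :: w) 0 ∈ Set.Ico (c i) (c i + α i) := by
        rw [wordMap_cons]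
        obtain ⟨h0, h1⟩ := wordMap_mem_Ico α c hpos hc0 hc1 w
        constructor
        · nlinarith [(hpos i).le]
        · nlinarith [hpos i]
      have memv : wordMap α c (i :: w) 0 ∈ Set.Ico (c k) (c k + α k) := by
        rw [h, wordMap_cons]
        obtain ⟨h0, h1⟩ := wordMap_mem_Ico α c hpos hc0 hc1 v
        constructor
        · nlinarith [(hpos k).le]
        · nlinarith [hpos k]
      have hik : i = k := by
        by_contra hne
        exact (hdisj hne).ne_of_mem memw memv rfl
      subst hik
      have h' : wordMap α c w 0 = wordMap α c v 0 := by
        rw [wordMap_cons, wordMap_cons] at h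
        have := hpos i
        nlinarith [h]
      obtain ⟨j, hj, hj0⟩ := ihw v h'
      exact ⟨j, by rcases hj with hj | hj <;> simp [hj], hj0⟩
end

section
/- Let Z(t) = e^{-t} |A_{e^{-t}}| for t ∈ ℝ, where A_λ = {v ∈ W(I) : α_v ≥ λ}. Then Z satisfies the renewal equation Z(t) = Σ_{i∈I} α_i Z(t − log(1/α_i)) + e^{-t} · [t ≥ 0] for all t ∈ ℝ. -/
/-!
A word of weight at least `μ` is either empty, which is possible iff `μ ≤ 1`, or `i :: v` with
`v` of weight at least `μ / α i`. Hence `|A_μ| = Σ_i |A_{μ/α_i}| + [μ ≤ 1]`, where only the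
finitely many letters with `α_i ≥ μ` contribute. Each `A_μ` is finite: its words use only those
letters, whose weights are bounded by some `c < 1`, so their length is bounded. Multiplying by
`μ = e^{-t}` and using `e^{-(t - log (1/α_i))} = μ / α_i` turns the count into the renewal equation.
-/

noncomputable def wordWeight {I : Type*} (α : I → ℝ) (v : List I) : ℝ :=
  (v.map α).prod

theorem List.finite_setOf_length_le_forall_mem {α : Type*} {s : Set α} (hs : s.Finite) (n : ℕ) :
    {l : List α | l.length ≤ n ∧ ∀ x ∈ l, x ∈ s}.Finite := by
  have := hs.to_subtype
  refine ((List.finite_length_le s n).image (List.map (↑))).subset ?_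
  rintro l ⟨hn, hl⟩
  lift l to List s using hl
  exact ⟨l, by simpa using hn, rfl⟩

theorem Summable.finite_setOf_le {ι : Type*} {f : ι → ℝ} (hf : Summable f) {μ : ℝ} (hμ : 0 < μ) :
    {i | μ ≤ f i}.Finite := by
  simpa using Filter.eventually_cofinite.mp (hf.tendsto_cofinite_zero.eventually (gt_mem_nhds hμ))

section
variable {I : Type*} {α : I → ℝ}

@[simp] theorem wordWeight_nil : wordWeight α [] = 1 := rfl

@[simp] theorem wordWeight_cons (i : I) (v : List I) :
    wordWeight α (i :: v) = α i * wordWeight α v := List.prod_cons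

theorem wordWeight_le_pow_length (h0 : ∀ i, 0 ≤ α i) {c : ℝ} {v : List I}
    (hc : ∀ x ∈ v, α x ≤ c) : wordWeight α v ≤ c ^ v.length := by
  simpa [wordWeight] using List.prod_map_le_prod_map₀ α (fun _ => c) (fun i _ => h0 i) hc

theorem wordWeight_le_one (h0 : ∀ i, 0 ≤ α i) (h1 : ∀ i, α i ≤ 1) (v : List I) :
    wordWeight α v ≤ 1 := by
  simpa using wordWeight_le_pow_length h0 (fun x _ => h1 x) (v := v)

theorem wordWeight_le_of_mem (h0 : ∀ i, 0 ≤ α i) (h1 : ∀ i, α i ≤ 1) {x : I} {v : List I}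
    (hx : x ∈ v) : wordWeight α v ≤ α x := by
  classical
  have hperm : wordWeight α v = α x * wordWeight α (v.erase x) :=
    ((List.perm_cons_erase hx).map α).prod_eq
  rw [hperm]
  exact mul_le_of_le_one_right (h0 x) (wordWeight_le_one h0 h1 _)

/-- The paper's `A_μ`. -/
def heavyWords (α : I → ℝ) (μ : ℝ) : Set (List I) := {v | μ ≤ wordWeight α v}

@[simp] theorem mem_heavyWords {μ : ℝ} {v : List I} :
    v ∈ heavyWords α μ ↔ μ ≤ wordWeight α v := Iff.rfl

theorem cons_mem_heavyWords {μ : ℝ} {i : I} (hi : 0 < α i) {v : List I} :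
    i :: v ∈ heavyWords α μ ↔ v ∈ heavyWords α (μ / α i) := by
  rw [mem_heavyWords, mem_heavyWords, wordWeight_cons, div_le_iff₀ hi, mul_comm]

theorem heavyWords_eq_empty (h0 : ∀ i, 0 ≤ α i) (h1 : ∀ i, α i ≤ 1) {μ : ℝ} (hμ : 1 < μ) :
    heavyWords α μ = ∅ :=
  Set.eq_empty_of_forall_notMem fun v hv => (hv.trans (wordWeight_le_one h0 h1 v)).not_gt hμ

theorem le_of_mem_heavyWords (h0 : ∀ i, 0 ≤ α i) (h1 : ∀ i, α i ≤ 1) {μ : ℝ} {v : List I}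
    (hv : v ∈ heavyWords α μ) {x : I} (hx : x ∈ v) : μ ≤ α x :=
  hv.trans (wordWeight_le_of_mem h0 h1 hx)

theorem exists_length_le_of_mem_heavyWords (h0 : ∀ i, 0 ≤ α i) (hlt : ∀ i, α i < 1)
    (hsum : Summable α) {μ : ℝ} (hμ : 0 < μ) :
    ∃ N : ℕ, ∀ v ∈ heavyWords α μ, v.length ≤ N := by
  have hbound : ∀ᶠ c in nhdsWithin (1 : ℝ) (Set.Iio 1), ∀ i ∈ {i | μ ≤ α i}, α i ≤ c :=
    (Filter.eventually_all_finite (hsum.finite_setOf_le hμ)).2 fun i _ =>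
      nhdsWithin_le_nhds (eventually_ge_nhds (hlt i))
  obtain ⟨c, hc, hc0, hc1⟩ := (hbound.and (Ioo_mem_nhdsLT one_pos)).exists
  obtain ⟨N, hN⟩ := exists_pow_lt_of_lt_one hμ hc1
  refine ⟨N, fun v hv => le_of_not_gt fun hlen => hN.not_ge ?_⟩
  calc μ ≤ wordWeight α v := hv
    _ ≤ c ^ v.length := wordWeight_le_pow_length h0 fun x hx =>
        hc x (le_of_mem_heavyWords h0 (fun i => (hlt i).le) hv hx)
    _ ≤ c ^ N := pow_le_pow_of_le_one hc0.le hc1.le hlen.le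

theorem heavyWords_finite (h0 : ∀ i, 0 ≤ α i) (hlt : ∀ i, α i < 1) (hsum : Summable α) {μ : ℝ}
    (hμ : 0 < μ) : (heavyWords α μ).Finite := by
  obtain ⟨N, hN⟩ := exists_length_le_of_mem_heavyWords h0 hlt hsum hμ
  exact (List.finite_setOf_length_le_forall_mem (hsum.finite_setOf_le hμ) N).subset
    fun v hv => ⟨hN v hv, fun x hx => le_of_mem_heavyWords h0 (fun i => (hlt i).le) hv hx⟩

theorem heavyWords_eq_biUnion (hpos : ∀ i, 0 < α i) (h1 : ∀ i, α i ≤ 1) (μ : ℝ) :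
    heavyWords α μ =
      (⋃ i ∈ {i | μ ≤ α i}, List.cons i '' heavyWords α (μ / α i)) ∪ {v | v = [] ∧ μ ≤ 1} := by
  ext (_ | ⟨i, v⟩)
  · simp
  · have h0 : ∀ i, 0 ≤ α i := fun i => (hpos i).le
    simp only [Set.mem_union, Set.mem_iUnion, Set.mem_image, List.cons.injEq,
      Set.mem_ofPred_eq, reduceCtorEq, false_and, or_false]
    constructor
    · intro hv
      exact ⟨i, le_of_mem_heavyWords h0 h1 hv List.mem_cons_self, v,
        (cons_mem_heavyWords (hpos i)).1 hv, rfl, rfl⟩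
    · rintro ⟨i, -, v, hv, rfl, rfl⟩
      exact (cons_mem_heavyWords (hpos i)).2 hv

theorem ncard_heavyWords (hpos : ∀ i, 0 < α i) (hlt : ∀ i, α i < 1) (hsum : Summable α) {μ : ℝ}
    (hμ : 0 < μ) :
    (heavyWords α μ).ncard =
      ∑ᶠ i ∈ {i | μ ≤ α i}, (heavyWords α (μ / α i)).ncard + if μ ≤ 1 then 1 else 0 := by
  have h0 : ∀ i, 0 ≤ α i := fun i => (hpos i).le
  have hfin : ∀ i, (heavyWords α (μ / α i)).Finite :=
    fun i => heavyWords_finite h0 hlt hsum (div_pos hμ (hpos i))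
  have hJ := hsum.finite_setOf_le hμ
  rw [heavyWords_eq_biUnion hpos (fun i => (hlt i).le) μ,
    Set.ncard_union_eq ?disj (hJ.biUnion fun i _ => (hfin i).image _)
      ((Set.finite_singleton []).subset fun v hv => hv.1),
    hJ.ncard_biUnion (fun i _ => (hfin i).image _) ?pairwise]
  · congr 1
    · exact finsum_mem_congr rfl fun i _ => Set.ncard_image_of_injective _ List.cons_injective
    · split_ifs with h <;> simp [h]
  case disj =>
    refine Set.disjoint_left.2 fun v hv hnil => ?_
    obtain ⟨i, -, w, -, rfl⟩ := Set.mem_iUnion₂.1 hv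
    exact List.cons_ne_nil i w hnil.1
  case pairwise =>
    intro i _ j _ hij
    refine Set.disjoint_left.2 ?_
    rintro _ ⟨v, -, rfl⟩ ⟨w, -, h⟩
    exact hij (List.cons.inj h).1.symm

theorem card_heavyWords (hpos : ∀ i, 0 < α i) (hlt : ∀ i, α i < 1) (hsum : Summable α) {μ : ℝ}
    (hμ : 0 < μ) :
    (Nat.card (heavyWords α μ) : ℝ) =
      ∑' i, (Nat.card (heavyWords α (μ / α i)) : ℝ) + if μ ≤ 1 then 1 else 0 := by
  have hJ := hsum.finite_setOf_le hμ
  have hvanish : ∀ i ∉ hJ.toFinset, (Nat.card (heavyWords α (μ / α i)) : ℝ) = 0 := by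
    intro i hi
    rw [heavyWords_eq_empty (fun i => (hpos i).le) (fun i => (hlt i).le)
      ((one_lt_div (hpos i)).2 (by simpa using hi))]
    simp
  rw [tsum_eq_sum hvanish]
  simp only [Nat.card_coe_set_eq]
  rw [ncard_heavyWords hpos hlt hsum hμ, finsum_mem_eq_finite_toFinset_sum _ hJ]
  push_cast
  rfl
end

theorem renewal_equation_Z_general {I : Type*} (α : I → ℝ)
    (hpos : ∀ i, 0 < α i) (hlt : ∀ i, α i < 1) (hsum : HasSum α 1) :
    ∀ t : ℝ,
      (fun s : ℝ => Real.exp (-s) *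
          (Nat.card {v : List I | Real.exp (-s) ≤ wordWeight α v} : ℝ)) t =
        (∑' i : I, α i *
          (fun s : ℝ => Real.exp (-s) *
            (Nat.card {v : List I | Real.exp (-s) ≤ wordWeight α v} : ℝ))
              (t - Real.log (α i)⁻¹)) +
          Real.exp (-t) * (if 0 ≤ t then 1 else 0) := by
  intro t
  have hshift : ∀ i, Real.exp (-(t - Real.log (α i)⁻¹)) = Real.exp (-t) / α i := fun i => by
    rw [neg_sub', sub_neg_eq_add, Real.exp_add, Real.exp_log (inv_pos.2 (hpos i)), div_eq_mul_inv]
  have hterm : ∀ i, α i * (Real.exp (-t) / α i) = Real.exp (-t) := fun i =>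
    mul_div_cancel₀ _ (hpos i).ne'
  have hstep : 0 ≤ t ↔ Real.exp (-t) ≤ 1 := by rw [Real.exp_le_one_iff, neg_nonpos]
  simp only [hshift, ← mul_assoc, hterm, tsum_mul_left, hstep, ← mul_add]
  exact congrArg _ (card_heavyWords hpos hlt hsum.summable (Real.exp_pos (-t)))

/-- The renewal equation for `Z(t) = e^{-t} |A_{e^{-t}}|`:
`Z(t) = Σ_{i∈I} α_i Z(t − log(1/α_i)) + e^{-t} [t ≥ 0]` for all `t ∈ ℝ`. -/
theorem renewal_equation_Z {I : Type*} [Countable I] (α : I → ℝ)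
    (hpos : ∀ i, 0 < α i) (hlt : ∀ i, α i < 1) (hsum : HasSum α 1) :
    ∀ t : ℝ,
      (fun s : ℝ => Real.exp (-s) *
          (Nat.card {v : List I | Real.exp (-s) ≤ wordWeight α v} : ℝ)) t =
        (∑' i : I, α i *
          (fun s : ℝ => Real.exp (-s) *
            (Nat.card {v : List I | Real.exp (-s) ≤ wordWeight α v} : ℝ))
              (t - Real.log (α i)⁻¹)) +
          Real.exp (-t) * (if 0 ≤ t then 1 else 0) :=
  renewal_equation_Z_general α hpos hlt hsum
end
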